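/- arXiv:1301.4685 — 2 statements merged into one kernel-verified Lean document; each statement's English description precedes it below -/
import Mathlib

section
/- Let A be a commutative complex algebra and let ‖·‖ and |·| be two uniform norms on A such that both (A,‖·‖) and (A,|·|) are Q-algebras. Then ‖x‖ = |x| for all x ∈ A; i.e., a uniform normed Q-algebra admits exactly one uniform Q-algebra norm. -/
/-- `x` is quasi-invertible: there is `y` with `x ∘ y = y ∘ x = 0`
where `x ∘ y = x + y - x*y`. -/
def IsQuasiInv {A : Type*} [NonUnitalRing A] (x : A) : Prop :=
  ∃ y, x + y - x * y = 0 ∧ y + x - y * x = 0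

/-- `S` is open in the topology induced by the norm `N`. -/
def NormOpen {A : Type*} [AddGroup A] (N : A → ℝ) (S : Set A) : Prop :=
  ∀ x ∈ S, ∃ ε > 0, ∀ y, N (y - x) < ε → y ∈ S

/-- A uniform norm: a submultiplicative norm satisfying the square property. -/
structure IsUniformNorm {A : Type*} [NonUnitalRing A] [Module ℂ A] (N : A → ℝ) : Prop where
  eq_zero_iff : ∀ x, N x = 0 ↔ x = 0
  add_le : ∀ x y, N (x + y) ≤ N x + N y
  smul_eq : ∀ (c : ℂ) (x : A), N (c • x) = ‖c‖ * N x
  mul_le : ∀ x y, N (x * y) ≤ N x * N y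
  sq_eq : ∀ x, N (x * x) = N x * N x


/-! For a uniform norm `N` the square property gives `N (x ^ 2 ^ k) = N x ^ 2 ^ k`, so in the
completion of the `ℓ¹`-unitization Gelfand's formula yields `N x ≤ r(x)`, the spectral radius of
`x` in `Unitization ℂ A`. If moreover the quasi-invertible elements form an `N`-open set, they
contain an `N`-ball around `0`, hence by iterated squaring every `y` with `N y < 1`: every `λ` with
`N x < ‖λ‖` lies outside the spectrum, and `r(x) ≤ N x`. So a uniform Q-algebra norm is the purely
algebraic quantity `r`. -/

open UniformSpace WithLp
open scoped ENNReal

theorem isUnit_one_sub_of_isUnit_one_sub_pow {R : Type*} [Ring R] {b : R} {n : ℕ}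
    (h : IsUnit (1 - b ^ n)) : IsUnit (1 - b) := by
  rw [← mul_neg_geom_sum] at h
  have hcomm : Commute (1 - b) (∑ i ∈ Finset.range n, b ^ i) :=
    .sum_right _ _ _ fun i _ ↦ (Commute.one_left _).sub_left ((Commute.refl b).pow_right i)
  exact (hcomm.isUnit_mul_iff.1 h).1

theorem nnnorm_le_spectralRadius_of_norm_pow_two_pow {B : Type*} [NormedCommRing B]
    [NormedAlgebra ℂ B] {a : B} (h : ∀ k : ℕ, ‖a ^ 2 ^ k‖ = ‖a‖ ^ 2 ^ k) :
    (‖a‖₊ : ℝ≥0∞) ≤ spectralRadius ℂ a := by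
  let ι : B →ₐ[ℂ] Completion B := ⟨Completion.coeRingHom, fun _ ↦ rfl⟩
  have hgelfand := (spectrum.pow_nnnorm_pow_one_div_tendsto_nhds_spectralRadius (ι a)).comp
    (tendsto_pow_atTop_atTop_of_one_lt one_lt_two)
  have hconst : ((fun n : ℕ ↦ (‖ι a ^ n‖₊ : ℝ≥0∞) ^ (1 / n : ℝ)) ∘ fun k ↦ 2 ^ k) =
      fun _ ↦ (‖a‖₊ : ℝ≥0∞) := by
    funext k
    have hk : ‖ι a ^ 2 ^ k‖₊ = ‖a‖₊ ^ 2 ^ k := by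
      ext
      rw [← map_pow, coe_nnnorm]
      change ‖((a ^ 2 ^ k : B) : Completion B)‖ = _
      rw [Completion.norm_coe, h]
      simp
    rw [Function.comp_apply, hk, ENNReal.coe_pow, ← ENNReal.rpow_natCast, ← ENNReal.rpow_mul]
    simp
  rw [hconst] at hgelfand
  calc (‖a‖₊ : ℝ≥0∞) = spectralRadius ℂ (ι a) := tendsto_nhds_unique tendsto_const_nhds hgelfand
    _ ≤ spectralRadius ℂ a := biSup_mono fun _ hz ↦ AlgHom.spectrum_apply_subset ι a hz

section QuasiInv

variable {A : Type*} [NonUnitalRing A]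

-- Mathlib's quasiregularity is for the circle operation `x + y + x * y`, ours for `x + y - x * y`.
theorem isQuasiInv_iff_isQuasiregular_neg {x : A} : IsQuasiInv x ↔ IsQuasiregular (-x) := by
  rw [isQuasiregular_iff]
  constructor
  · rintro ⟨y, h₁, h₂⟩
    exact ⟨-y, by rw [← neg_zero, ← h₁]; noncomm_ring, by rw [← neg_zero, ← h₂]; noncomm_ring⟩
  · rintro ⟨y, h₁, h₂⟩
    exact ⟨-y, by rw [← neg_zero, ← h₁]; noncomm_ring, by rw [← neg_zero, ← h₂]; noncomm_ring⟩

theorem isQuasiInv_iff_isUnit_one_sub (R : Type*) [CommRing R] [Module R A]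
    [IsScalarTower R A A] [SMulCommClass R A A] {x : A} :
    IsQuasiInv x ↔ IsUnit (1 - (x : Unitization R A)) := by
  rw [isQuasiInv_iff_isQuasiregular_neg, isQuasiregular_iff_isUnit' R, Unitization.inr_neg,
    ← sub_eq_add_neg]

theorem Unitization.inr_iterate_mul_self (R : Type*) [CommRing R] [Module R A]
    [IsScalarTower R A A] [SMulCommClass R A A] (k : ℕ) (x : A) :
    (((fun y ↦ y * y)^[k] x : A) : Unitization R A) = (x : Unitization R A) ^ 2 ^ k := by
  induction k with
  | zero => simp
  | succ k ih => rw [Function.iterate_succ_apply', Unitization.inr_mul, ih, pow_succ, pow_mul, sq]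

theorem IsQuasiInv.of_iterate_mul_self {k : ℕ} {x : A}
    (h : IsQuasiInv ((fun y ↦ y * y)^[k] x)) : IsQuasiInv x := by
  rw [isQuasiInv_iff_isUnit_one_sub ℤ] at h ⊢
  rw [Unitization.inr_iterate_mul_self] at h
  exact isUnit_one_sub_of_isUnit_one_sub_pow (R := Unitization ℤ A) h

end QuasiInv

namespace IsUniformNorm

section NonUnitalRing

variable {A : Type*} [NonUnitalRing A] [Module ℂ A] {N : A → ℝ}

abbrev toAddGroupNorm (hN : IsUniformNorm N) : AddGroupNorm A where
  toFun := N
  map_zero' := (hN.eq_zero_iff 0).2 rfl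
  add_le' := hN.add_le
  neg' x := by simpa using hN.smul_eq (-1) x
  eq_zero_of_map_eq_zero' x := (hN.eq_zero_iff x).1

theorem nonneg (hN : IsUniformNorm N) (x : A) : 0 ≤ N x :=
  apply_nonneg hN.toAddGroupNorm x

theorem map_iterate_mul_self (hN : IsUniformNorm N) (k : ℕ) (x : A) :
    N ((fun y ↦ y * y)^[k] x) = N x ^ 2 ^ k := by
  induction k with
  | zero => simp
  | succ k ih => rw [Function.iterate_succ_apply', hN.sq_eq, ih, pow_succ, pow_mul, sq]

theorem isQuasiInv_of_lt_one (hN : IsUniformNorm N) (hQ : NormOpen N {x | IsQuasiInv x})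
    {y : A} (hy : N y < 1) : IsQuasiInv y := by
  obtain ⟨ε, hε, hball⟩ := hQ 0 ⟨0, by simp, by simp⟩
  obtain ⟨k, hk⟩ := exists_pow_lt_of_lt_one hε hy
  apply IsQuasiInv.of_iterate_mul_self (k := k)
  apply hball
  rw [sub_zero, hN.map_iterate_mul_self]
  exact (pow_le_pow_of_le_one (hN.nonneg y) hy.le Nat.lt_two_pow_self.le).trans_lt hk

theorem norm_le_of_mem_quasispectrum (hN : IsUniformNorm N) (hQ : NormOpen N {x | IsQuasiInv x})
    {x : A} {z : ℂ} (hz : z ∈ quasispectrum ℂ x) : ‖z‖ ≤ N x := by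
  by_contra! hlt
  have hz0 : z ≠ 0 := norm_pos_iff.1 ((hN.nonneg x).trans_lt hlt)
  refine hz hz0.isUnit ?_
  rw [← isQuasiInv_iff_isQuasiregular_neg]
  apply hN.isQuasiInv_of_lt_one hQ
  rw [Units.smul_def, Units.val_inv_eq_inv_val, IsUnit.unit_spec, hN.smul_eq, norm_inv]
  exact (inv_mul_lt_one₀ (norm_pos_iff.2 hz0)).2 hlt

theorem spectralRadius_inr_le [IsScalarTower ℂ A A] [SMulCommClass ℂ A A]
    (hN : IsUniformNorm N) (hQ : NormOpen N {x | IsQuasiInv x}) (x : A) :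
    spectralRadius ℂ (x : Unitization ℂ A) ≤ ENNReal.ofReal (N x) := by
  refine iSup₂_le fun z hz ↦ ?_
  rw [← Unitization.quasispectrum_eq_spectrum_inr] at hz
  rw [← enorm_eq_nnnorm, ← ofReal_norm]
  exact ENNReal.ofReal_le_ofReal (hN.norm_le_of_mem_quasispectrum hQ hz)

end NonUnitalRing

section NonUnitalCommRing

variable {A : Type*} [NonUnitalCommRing A] [Module ℂ A] {N : A → ℝ}

abbrev toNonUnitalNormedCommRing (hN : IsUniformNorm N) : NonUnitalNormedCommRing A :=
  { ‹NonUnitalCommRing A›, hN.toAddGroupNorm.toNormedAddCommGroup with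
    norm_mul_le := hN.mul_le }

variable [IsScalarTower ℂ A A] [SMulCommClass ℂ A A]

theorem ofReal_le_spectralRadius_inr (hN : IsUniformNorm N) (x : A) :
    ENNReal.ofReal (N x) ≤ spectralRadius ℂ (x : Unitization ℂ A) := by
  let _ := hN.toNonUnitalNormedCommRing
  let _ : NormedSpace ℂ A := ⟨fun c y ↦ (hN.smul_eq c y).le⟩
  -- Mathlib makes `Completion B` a normed algebra only for commutative `B`.
  let _ : NormedCommRing (WithLp 1 (Unitization ℂ A)) :=
    { (inferInstance : NormedRing (WithLp 1 (Unitization ℂ A))) with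
      mul_comm := fun a b ↦ congrArg (toLp 1) (mul_comm (ofLp a) (ofLp b)) }
  have hnorm (y : A) : ‖toLp 1 (y : Unitization ℂ A)‖ = N y := unitization_norm_inr y
  have hpow (k : ℕ) : toLp 1 (x : Unitization ℂ A) ^ 2 ^ k =
      toLp 1 (((fun y ↦ y * y)^[k] x : A) : Unitization ℂ A) := by
    rw [Unitization.inr_iterate_mul_self]; rfl
  have hspec : spectrum ℂ (toLp 1 (x : Unitization ℂ A)) = spectrum ℂ (x : Unitization ℂ A) :=
    (AlgEquiv.spectrum_eq (unitizationAlgEquiv (𝕜 := ℂ) (A := A) ℂ) _).symm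
  calc ENNReal.ofReal (N x) = ‖toLp 1 (x : Unitization ℂ A)‖₊ := by
        rw [← hnorm x, ← enorm_eq_nnnorm, ofReal_norm]
    _ ≤ spectralRadius ℂ (toLp 1 (x : Unitization ℂ A)) :=
        nnnorm_le_spectralRadius_of_norm_pow_two_pow fun k ↦ by
          rw [hpow, hnorm, hnorm, hN.map_iterate_mul_self]
    _ = spectralRadius ℂ (x : Unitization ℂ A) := by rw [spectralRadius, spectralRadius, hspec]

theorem ofReal_eq_spectralRadius_inr (hN : IsUniformNorm N)
    (hQ : NormOpen N {x | IsQuasiInv x}) (x : A) :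
    ENNReal.ofReal (N x) = spectralRadius ℂ (x : Unitization ℂ A) :=
  le_antisymm (hN.ofReal_le_spectralRadius_inr x) (hN.spectralRadius_inr_le hQ x)

end NonUnitalCommRing

end IsUniformNorm

/-- If `N` and `q` are two uniform norms on `A` each making `A` a Q-algebra,
then `N = q`: a uniform normed Q-algebra admits exactly one uniform Q-algebra norm. -/
theorem uniform_qAlgebra_norm_unique {A : Type*} [NonUnitalCommRing A] [Module ℂ A]
    [SMulCommClass ℂ A A] [IsScalarTower ℂ A A]
    (N q : A → ℝ) (hN : IsUniformNorm N) (hq : IsUniformNorm q)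
    (hQN : NormOpen N {x | IsQuasiInv x}) (hQq : NormOpen q {x | IsQuasiInv x}) :
    ∀ x, N x = q x := by
  intro x
  rw [← ENNReal.ofReal_eq_ofReal_iff (hN.nonneg x) (hq.nonneg x),
    hN.ofReal_eq_spectralRadius_inr hQN, hq.ofReal_eq_spectralRadius_inr hQq]
end

section
/- Let A be a commutative complex Hausdorff topological algebra whose topology is induced by a family {p_u : u ∈ U} of uniform seminorms, and suppose the set M(A) of nonzero continuous multiplicative linear functionals on A is equicontinuous. Then q(x) = sup{|f(x)| : f ∈ M(A)} defines a uniform norm on A which induces the topology of A; in particular A is a uniform normed algebra. -/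
/-!
A continuous uniform seminorm `p` is attained by a continuous character at every point where it
does not vanish. Indeed, completing the `ℓ¹`-unitization of `(A, p)` gives a commutative complex
Banach algebra into which `A` maps with `‖j x‖ = p x`; the square property gives
`‖(j x) ^ 2 ^ n‖ = ‖j x‖ ^ 2 ^ n`, so by Gelfand's formula the spectral radius of `j x` is `p x`,
and some character of the Banach algebra takes a spectral value of maximal modulus at `j x`.
Hence every defining seminorm `P i` is bounded by `q = sup {|f| : f ∈ M(A)}`, which forces `q` to be
a norm. Equicontinuity of `M(A)` makes `q` a well-defined continuous seminorm, so `q` is squeezed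
between the `P i` and finitely many of them and defines the topology of `A`; multiplicativity of
characters gives the square property of `q`.
-/

/-- `M(A)`: the nonzero continuous multiplicative linear functionals on the
topological algebra `A`. -/
def CharSpace (A : Type*) [NonUnitalRing A] [Module ℂ A] [TopologicalSpace A] :
    Set (A → ℂ) :=
  {f | (∀ x y, f (x + y) = f x + f y) ∧ (∀ (c : ℂ) (x : A), f (c • x) = c * f x) ∧
       (∀ x y, f (x * y) = f x * f y) ∧ f ≠ 0 ∧ Continuous f}

open scoped ENNReal
open Filter WeakDual UniformSpace

theorem spectralRadius_eq_nnnorm_of_nnnorm_pow_two_pow {B : Type*} [NormedRing B]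
    [NormedAlgebra ℂ B] [CompleteSpace B] {a : B} (h : ∀ n : ℕ, ‖a ^ 2 ^ n‖₊ = ‖a‖₊ ^ 2 ^ n) :
    spectralRadius ℂ a = ‖a‖₊ := by
  refine tendsto_nhds_unique ?_ (tendsto_const_nhds (x := (‖a‖₊ : ℝ≥0∞)) (f := atTop (α := ℕ)))
  convert (spectrum.pow_nnnorm_pow_one_div_tendsto_nhds_spectralRadius a).comp
      (tendsto_pow_atTop_atTop_of_one_lt one_lt_two) using 1
  refine funext fun n => ?_
  rw [Function.comp_apply, h, ENNReal.coe_pow, ← ENNReal.rpow_natCast, ← ENNReal.rpow_mul]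
  simp

theorem WeakDual.CharacterSpace.exists_norm_apply_eq {B : Type*} [NormedCommRing B]
    [NormedAlgebra ℂ B] [CompleteSpace B] [Nontrivial B] {a : B}
    (h : ∀ n : ℕ, ‖a ^ 2 ^ n‖ = ‖a‖ ^ 2 ^ n) :
    ∃ φ : characterSpace ℂ B, ‖φ a‖ = ‖a‖ := by
  obtain ⟨z, hz, hz_norm⟩ := spectrum.exists_nnnorm_eq_spectralRadius a
  obtain ⟨φ, rfl⟩ := CharacterSpace.mem_spectrum_iff_exists.mp hz
  rw [spectralRadius_eq_nnnorm_of_nnnorm_pow_two_pow fun n => NNReal.eq (by simpa using h n),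
    ENNReal.coe_inj] at hz_norm
  exact ⟨φ, congrArg NNReal.toReal hz_norm⟩

noncomputable instance WithLp.instUnitizationNormedCommRing {𝕜 X : Type*} [NormedField 𝕜]
    [NonUnitalNormedCommRing X] [NormedSpace 𝕜 X] [IsScalarTower 𝕜 X X] [SMulCommClass 𝕜 X X] :
    NormedCommRing (WithLp 1 (Unitization 𝕜 X)) where
  mul_comm x y := congrArg (WithLp.toLp 1) (mul_comm (WithLp.ofLp x) (WithLp.ofLp y))

instance SeparationQuotient.instIsScalarTowerSelf {R X : Type*} [Mul X] [SMul R X]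
    [TopologicalSpace X] [ContinuousMul X] [ContinuousConstSMul R X] [IsScalarTower R X X] :
    IsScalarTower R (SeparationQuotient X) (SeparationQuotient X) where
  smul_assoc c x y := by
    obtain ⟨x, rfl⟩ := SeparationQuotient.surjective_mk x
    obtain ⟨y, rfl⟩ := SeparationQuotient.surjective_mk y
    simp only [smul_eq_mul, ← SeparationQuotient.mk_smul, ← SeparationQuotient.mk_mul,
      smul_mul_assoc]

instance SeparationQuotient.instSMulCommClassSelf {R X : Type*} [Mul X] [SMul R X]
    [TopologicalSpace X] [ContinuousMul X] [ContinuousConstSMul R X] [SMulCommClass R X X] :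
    SMulCommClass R (SeparationQuotient X) (SeparationQuotient X) where
  smul_comm c x y := by
    obtain ⟨x, rfl⟩ := SeparationQuotient.surjective_mk x
    obtain ⟨y, rfl⟩ := SeparationQuotient.surjective_mk y
    simp only [smul_eq_mul, ← SeparationQuotient.mk_smul, ← SeparationQuotient.mk_mul,
      mul_smul_comm]

instance UniformSpace.Completion.instNontrivial {α : Type*} [UniformSpace α] [T0Space α]
    [Nontrivial α] : Nontrivial (Completion α) :=
  (Completion.coe_injective α).nontrivial

section WithSubmulSeminorm

variable {𝕜 : Type*} [NormedField 𝕜] {A : Type*} [NonUnitalCommRing A] [Module 𝕜 A]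
  [SMulCommClass 𝕜 A A] [IsScalarTower 𝕜 A A]

/-- `A` with the topology of a submultiplicative seminorm `p`, as a seminormed algebra. -/
def WithSubmulSeminorm (p : Seminorm 𝕜 A) (_ : ∀ x y, p (x * y) ≤ p x * p y) : Type _ := A

namespace WithSubmulSeminorm

variable (p : Seminorm 𝕜 A) (hp : ∀ x y, p (x * y) ≤ p x * p y)

instance : NonUnitalCommRing (WithSubmulSeminorm p hp) := inferInstanceAs (NonUnitalCommRing A)
instance : Module 𝕜 (WithSubmulSeminorm p hp) := inferInstanceAs (Module 𝕜 A)
instance : SMulCommClass 𝕜 (WithSubmulSeminorm p hp) (WithSubmulSeminorm p hp) :=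
  inferInstanceAs (SMulCommClass 𝕜 A A)
instance : IsScalarTower 𝕜 (WithSubmulSeminorm p hp) (WithSubmulSeminorm p hp) :=
  inferInstanceAs (IsScalarTower 𝕜 A A)

noncomputable instance : SeminormedAddCommGroup (WithSubmulSeminorm p hp) :=
  AddGroupSeminormClass.toSeminormedAddCommGroup (p.toAddGroupSeminorm : AddGroupSeminorm A)

noncomputable instance : NonUnitalSeminormedCommRing (WithSubmulSeminorm p hp) where
  dist_eq := dist_eq_norm_neg_add
  norm_mul_le := hp
  mul_comm := mul_comm (G := A)

noncomputable instance : NormedSpace 𝕜 (WithSubmulSeminorm p hp) where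
  norm_smul_le c x := (map_smul_eq_mul p c x).le

abbrev UnitalCompletion : Type _ :=
  Completion (WithLp 1 (Unitization 𝕜 (SeparationQuotient (WithSubmulSeminorm p hp))))

def ofSeminormed : A →ₙₐ[𝕜] WithSubmulSeminorm p hp := NonUnitalAlgHom.id 𝕜 A

noncomputable def toUnitalCompletion : A →ₙₐ[𝕜] UnitalCompletion p hp where
  toFun x := Completion.coe' <| WithLp.toLp 1 <|
    Unitization.inr (R := 𝕜) <| SeparationQuotient.mk <| ofSeminormed p hp x
  map_smul' c x := by simp [Completion.coe_smul]
  map_zero' := by simp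
  map_add' x y := by simp [Completion.coe_add]
  map_mul' x y := by
    simp only [map_mul, SeparationQuotient.mk_mul, Unitization.inr_mul]
    exact Completion.coe_mul _ _

theorem norm_toUnitalCompletion (x : A) : ‖toUnitalCompletion p hp x‖ = p x := by
  simp only [toUnitalCompletion, NonUnitalAlgHom.coe_mk, Completion.norm_coe,
    WithLp.unitization_norm_inr, SeparationQuotient.norm_mk]
  rfl

theorem continuous_toUnitalCompletion [TopologicalSpace A] [IsTopologicalAddGroup A]
    (hc : Continuous p) : Continuous (toUnitalCompletion p hp) := by
  refine continuous_of_continuousAt_zero (toUnitalCompletion p hp) ?_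
  rw [ContinuousAt, map_zero, tendsto_zero_iff_norm_tendsto_zero]
  simpa [norm_toUnitalCompletion] using hc.tendsto 0

end WithSubmulSeminorm

end WithSubmulSeminorm

theorem NonUnitalAlgHom.coe_mem_charSpace {A : Type*} [NonUnitalRing A] [Module ℂ A]
    [TopologicalSpace A] (f : A →ₙₐ[ℂ] ℂ) (hf : Continuous f) (hne : f ≠ 0) :
    ⇑f ∈ CharSpace A :=
  ⟨map_add f, map_smul f, map_mul f, fun h => hne (NonUnitalAlgHom.ext (congrFun h)), hf⟩

theorem Seminorm.exists_mem_charSpace_norm_apply_eq {A : Type*} [NonUnitalCommRing A]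
    [Module ℂ A] [SMulCommClass ℂ A A] [IsScalarTower ℂ A A] [TopologicalSpace A]
    [IsTopologicalAddGroup A] (p : Seminorm ℂ A) (hmul : ∀ x y, p (x * y) ≤ p x * p y)
    (hsq : ∀ x, p (x * x) = p x * p x) (hcont : Continuous p) {x : A} (hx : p x ≠ 0) :
    ∃ f ∈ CharSpace A, ‖f x‖ = p x := by
  set j := WithSubmulSeminorm.toUnitalCompletion p hmul
  have hj : ∀ y, ‖j y‖ = p y := WithSubmulSeminorm.norm_toUnitalCompletion p hmul
  have hpow : ∀ n y, ‖j y ^ 2 ^ n‖ = ‖j y‖ ^ 2 ^ n := by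
    intro n
    induction n with
    | zero => simp
    | succ n ih =>
      intro y
      rw [pow_succ', pow_mul, sq, ← map_mul, ih, hj, hj, hsq, ← sq, ← pow_mul, ← pow_succ']
  obtain ⟨φ, hφ⟩ := CharacterSpace.exists_norm_apply_eq (hpow · x)
  set f := (CharacterSpace.toNonUnitalAlgHom φ).comp j
  have hfx : ‖f x‖ = p x := by rw [← hj]; exact hφ
  refine ⟨f, f.coe_mem_charSpace ?_ ?_, hfx⟩
  · exact (map_continuous φ).comp (WithSubmulSeminorm.continuous_toUnitalCompletion p hmul hcont)
  · intro hf
    rw [hf, NonUnitalAlgHom.zero_apply, norm_zero] at hfx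
    exact hx hfx.symm

namespace CharSpace

variable {A : Type*} [NonUnitalRing A] [Module ℂ A] [TopologicalSpace A]

def toLinearMap (f : CharSpace A) : A →ₗ[ℂ] ℂ where
  toFun := f
  map_add' := f.2.1
  map_smul' := f.2.2.1

noncomputable def normSeminorm (f : CharSpace A) : Seminorm ℂ A :=
  (_root_.normSeminorm ℂ ℂ).comp (toLinearMap f)

/-- Junk (`⊥`) unless `Set.range normSeminorm` is bounded above. -/
noncomputable def supSeminorm (A : Type*) [NonUnitalRing A] [Module ℂ A] [TopologicalSpace A] :
    Seminorm ℂ A :=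
  ⨆ f : CharSpace A, normSeminorm f

theorem supSeminorm_apply (hb : BddAbove (Set.range (normSeminorm (A := A)))) (x : A) :
    supSeminorm A x = ⨆ f : CharSpace A, ‖(f : A → ℂ) x‖ :=
  Seminorm.iSup_apply hb

theorem supSeminorm_eq_sSup (hb : BddAbove (Set.range (normSeminorm (A := A)))) (x : A) :
    supSeminorm A x = sSup ((fun f : A → ℂ => ‖f x‖) '' CharSpace A) := by
  rw [supSeminorm_apply hb, sSup_image']

theorem norm_apply_le_supSeminorm (hb : BddAbove (Set.range (normSeminorm (A := A))))
    (f : CharSpace A) (x : A) : ‖(f : A → ℂ) x‖ ≤ supSeminorm A x := by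
  rw [supSeminorm_apply hb]
  exact le_ciSup (Seminorm.bddAbove_range_iff.mp hb x) f

theorem supSeminorm_mul_le (hb : BddAbove (Set.range (normSeminorm (A := A)))) (x y : A) :
    supSeminorm A (x * y) ≤ supSeminorm A x * supSeminorm A y := by
  rw [supSeminorm_apply hb]
  refine Real.iSup_le (fun f => ?_) (by positivity)
  rw [f.2.2.2.1, norm_mul]
  exact mul_le_mul (norm_apply_le_supSeminorm hb f x) (norm_apply_le_supSeminorm hb f y)
    (norm_nonneg _) (apply_nonneg _ _)

theorem supSeminorm_mul_self (hb : BddAbove (Set.range (normSeminorm (A := A)))) (x : A) :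
    supSeminorm A (x * x) = supSeminorm A x * supSeminorm A x := by
  refine le_antisymm (supSeminorm_mul_le hb x x) ?_
  have hsqrt : supSeminorm A x ≤ √(supSeminorm A (x * x)) := by
    rw [supSeminorm_apply hb]
    refine Real.iSup_le (fun f => Real.le_sqrt_of_sq_le ?_) (Real.sqrt_nonneg _)
    rw [sq, ← norm_mul, ← f.2.2.2.1]
    exact norm_apply_le_supSeminorm hb f _
  calc supSeminorm A x * supSeminorm A x
      ≤ √(supSeminorm A (x * x)) * √(supSeminorm A (x * x)) :=
        mul_self_le_mul_self (apply_nonneg _ _) hsqrt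
    _ = supSeminorm A (x * x) := Real.mul_self_sqrt (apply_nonneg _ _)

theorem bddAbove_and_continuous_supSeminorm [IsTopologicalAddGroup A] [ContinuousSMul ℂ A]
    (heq : Equicontinuous (fun f : CharSpace A => (f : A → ℂ))) :
    BddAbove (Set.range (normSeminorm (A := A))) ∧ Continuous (supSeminorm A) := by
  let := IsTopologicalAddGroup.rightUniformSpace A
  have := isUniformAddGroup_of_addCommGroup (G := A)
  have h := ((norm_withSeminorms ℂ ℂ).equicontinuous_TFAE
    (toLinearMap : CharSpace A → A →ₗ[ℂ] ℂ)).out 1 4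
  obtain ⟨hb, hc⟩ := h.mp heq 0
  rw [← Seminorm.coe_iSup_eq hb] at hc
  exact ⟨hb, hc⟩

end CharSpace

theorem CharSpace.seminorm_le_supSeminorm {A : Type*} [NonUnitalCommRing A] [Module ℂ A]
    [SMulCommClass ℂ A A] [IsScalarTower ℂ A A] [TopologicalSpace A] [IsTopologicalAddGroup A]
    (hb : BddAbove (Set.range (CharSpace.normSeminorm (A := A)))) (p : Seminorm ℂ A)
    (hmul : ∀ x y, p (x * y) ≤ p x * p y) (hsq : ∀ x, p (x * x) = p x * p x)
    (hcont : Continuous p) : p ≤ CharSpace.supSeminorm A := by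
  intro x
  rcases eq_or_ne (p x) 0 with h0 | h0
  · exact h0 ▸ apply_nonneg _ x
  obtain ⟨f, hf, hfx⟩ := p.exists_mem_charSpace_norm_apply_eq hmul hsq hcont h0
  exact hfx ▸ CharSpace.norm_apply_le_supSeminorm hb ⟨f, hf⟩ x

theorem WithSeminorms.of_continuous_of_forall_le {𝕜 E ι : Type*} [NontriviallyNormedField 𝕜]
    [AddCommGroup E] [Module 𝕜 E] [TopologicalSpace E] {p : SeminormFamily 𝕜 E ι}
    (hp : WithSeminorms p) {q : Seminorm 𝕜 E} (hq : Continuous q) (hpq : ∀ i, p i ≤ q) :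
    WithSeminorms (fun _ : Fin 1 => q) := by
  refine hp.congr ?_ ?_
  · obtain ⟨s, C, -, hC⟩ := Seminorm.bound_of_continuous hp q hq
    exact fun _ => ⟨s, C, hC⟩
  · exact fun i => ⟨{0}, 1, by simpa using hpq i⟩

theorem uniform_norm_of_equicontinuous_charSpace_general {A : Type*} [NonUnitalCommRing A]
    [Module ℂ A] [SMulCommClass ℂ A A] [IsScalarTower ℂ A A]
    [TopologicalSpace A] [T2Space A]
    {ι : Type*} (P : SeminormFamily ℂ A ι) (hP : WithSeminorms P)
    (hPmul : ∀ i x y, P i (x * y) ≤ P i x * P i y)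
    (hPsq : ∀ i x, P i (x * x) = P i x * P i x)
    (heq : Equicontinuous (fun f : ↥(CharSpace A) => (f : A → ℂ))) :
    ∃ Q : Seminorm ℂ A,
      (∀ x, Q x = sSup ((fun f : A → ℂ => ‖f x‖) '' CharSpace A)) ∧
      (∀ x, Q x = 0 → x = 0) ∧
      (∀ x y, Q (x * y) ≤ Q x * Q y) ∧
      (∀ x, Q (x * x) = Q x * Q x) ∧
      WithSeminorms (fun _ : Fin 1 => Q) := by
  have := hP.topologicalAddGroup
  have := hP.continuousSMul
  obtain ⟨hb, hcont⟩ := CharSpace.bddAbove_and_continuous_supSeminorm heq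
  have hPle : ∀ i, P i ≤ CharSpace.supSeminorm A := fun i =>
    CharSpace.seminorm_le_supSeminorm hb (P i) (hPmul i) (hPsq i) (hP.continuous_seminorm i)
  refine ⟨CharSpace.supSeminorm A, CharSpace.supSeminorm_eq_sSup hb, fun x hx => ?_,
    CharSpace.supSeminorm_mul_le hb, CharSpace.supSeminorm_mul_self hb,
    hP.of_continuous_of_forall_le hcont hPle⟩
  by_contra hx0
  obtain ⟨i, hi⟩ := hP.separating_of_T1 x hx0
  exact hi (le_antisymm (hx ▸ hPle i x) (apply_nonneg _ _))

/-- Let `A` be a commutative complex Hausdorff topological algebra whose topology is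
induced by a family `P` of uniform seminorms, and suppose `M(A)` is equicontinuous.
Then `q x = sup {‖f x‖ : f ∈ M(A)}` is a uniform norm on `A` inducing its topology;
in particular `A` is a uniform normed algebra. -/
theorem uniform_norm_of_equicontinuous_charSpace {A : Type*} [NonUnitalCommRing A]
    [Module ℂ A] [SMulCommClass ℂ A A] [IsScalarTower ℂ A A]
    [TopologicalSpace A] [T2Space A]
    {ι : Type*} [Nonempty ι] (P : SeminormFamily ℂ A ι) (hP : WithSeminorms P)
    (hPmul : ∀ i x y, P i (x * y) ≤ P i x * P i y)
    (hPsq : ∀ i x, P i (x * x) = P i x * P i x)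
    (heq : Equicontinuous (fun f : ↥(CharSpace A) => (f : A → ℂ))) :
    ∃ Q : Seminorm ℂ A,
      (∀ x, Q x = sSup ((fun f : A → ℂ => ‖f x‖) '' CharSpace A)) ∧
      (∀ x, Q x = 0 → x = 0) ∧
      (∀ x y, Q (x * y) ≤ Q x * Q y) ∧
      (∀ x, Q (x * x) = Q x * Q x) ∧
      WithSeminorms (fun _ : Fin 1 => Q) :=
  uniform_norm_of_equicontinuous_charSpace_general P hP hPmul hPsq heq
end
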